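/- Let E = {(v, w) ∈ ℝ³ × ℝ³ : ‖v‖ = 1, ‖w‖ = 1, v₁ ≥ |w₁|, v₃ ≥ |w₃|, w₂ ≥ 0}. Then E is contractible, and for any positive masses m₁, m₂, m₃, m₄ the set 𝓜⁺ = {r ∈ [0,∞)⁶ : I(r) = 1 and P(r) = 0} is homeomorphic to E. -/

import Mathlib

/-!
The linear substitution `v = (r₁₂ + r₃₄, r₁₃ - r₂₄, r₁₄ + r₂₃)`, `w = (r₁₂ - r₃₄, r₁₃ + r₂₄, r₁₄ - r₂₃)`
satisfies `‖v‖² - ‖w‖² = 4 P(r)`, and `v₁ ≥ |w₁|`, `v₃ ≥ |w₃|` say exactly that `r₁₂, r₃₄, r₁₄, r₂₃ ≥ 0`;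
when `P = 0` these force `r₁₃ r₂₄ ≥ 0`, so `w₂ = r₁₃ + r₂₄ ≥ 0` gives the remaining signs. Hence the
substitution maps the cone `{r ≥ 0, P = 0}` onto the cone over `E`, and `𝓜⁺ = {I = 1}` and
`{‖v‖ = 1}` are two sections of that cone, identified by radial projection.

`E` is contractible: normalising the segment from `w` to `e₂` and then the one from `v` to `e₁`
never passes through `0` (as `w₂, v₁ ≥ 0`) and only shrinks the coordinates bounded in `E`.
-/

/-- The Ptolemy function `P` as a function of
`r = (r₁₂, r₁₃, r₁₄, r₂₃, r₂₄, r₃₄) ∈ ℝ⁶`. -/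
def Pvec (r : Fin 6 → ℝ) : ℝ :=
  r 0 * r 5 + r 2 * r 3 - r 1 * r 4

/-- The moment of inertia `I` as a function of `r ∈ ℝ⁶`. -/
noncomputable def Ivec (m1 m2 m3 m4 : ℝ) (r : Fin 6 → ℝ) : ℝ :=
  (1/(2*(m1 + m2 + m3 + m4))) *
    (m1*m2*(r 0)^2 + m1*m3*(r 1)^2 + m1*m4*(r 2)^2 +
     m2*m3*(r 3)^2 + m2*m4*(r 4)^2 + m3*m4*(r 5)^2)

/-- The set `𝓜⁺ = {r ∈ [0,∞)⁶ : I(r) = 1, P(r) = 0}`. -/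
noncomputable def setMplus (m1 m2 m3 m4 : ℝ) : Set (Fin 6 → ℝ) :=
  {r | (∀ i, 0 ≤ r i) ∧ Ivec m1 m2 m3 m4 r = 1 ∧ Pvec r = 0}

/-- The set `E ⊆ S² × S²` cut out by the inequalities
`v₁ ≥ |w₁|`, `v₃ ≥ |w₃|`, `w₂ ≥ 0`. -/
def setE : Set (EuclideanSpace ℝ (Fin 3) × EuclideanSpace ℝ (Fin 3)) :=
  {p | ‖p.1‖ = 1 ∧ ‖p.2‖ = 1 ∧
    p.1 0 ≥ |p.2 0| ∧ p.1 2 ≥ |p.2 2| ∧ p.2 1 ≥ 0}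

open RealInnerProductSpace EuclideanSpace

noncomputable section

lemma abs_sub_le_add_iff {a b : ℝ} : |a - b| ≤ a + b ↔ 0 ≤ a ∧ 0 ≤ b := by
  rw [abs_sub_le_iff]
  constructor <;> rintro ⟨h₁, h₂⟩ <;> constructor <;> linarith

section RadialProjection

variable {E : Type*} [AddCommGroup E] [Module ℝ E] {K : Set E} {f g : E → ℝ}

lemma ne_zero_of_homogeneous_eq_one (hf : ∀ c : ℝ, 0 < c → ∀ x ∈ K, f (c • x) = c * f x)
    {x : E} (hx : x ∈ K) (h1 : f x = 1) : x ≠ 0 := by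
  rintro rfl
  have h := hf 2 two_pos 0 hx
  rw [smul_zero] at h
  linarith

lemma inv_smul_mem_levelSet (hK : ∀ c : ℝ, 0 < c → ∀ x ∈ K, c • x ∈ K)
    (hg : ∀ c : ℝ, 0 < c → ∀ x ∈ K, g (c • x) = c * g x) {x : E} (hx : x ∈ K) (hgx : 0 < g x) :
    (g x)⁻¹ • x ∈ {x | x ∈ K ∧ g x = 1} :=
  ⟨hK _ (inv_pos.2 hgx) x hx, by rw [hg _ (inv_pos.2 hgx) x hx, inv_mul_cancel₀ hgx.ne']⟩

lemma inv_smul_inv_smul_of_eq_one (hf : ∀ c : ℝ, 0 < c → ∀ x ∈ K, f (c • x) = c * f x)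
    {x : E} (hx : x ∈ K) (hfx : f x = 1) {c : ℝ} (hc : 0 < c) : (f (c • x))⁻¹ • c • x = x := by
  rw [hf c hc x hx, hfx, mul_one, smul_smul, inv_mul_cancel₀ hc.ne', one_smul]

variable [TopologicalSpace E] [ContinuousSMul ℝ E]

def radialHomeomorph (hK : ∀ c : ℝ, 0 < c → ∀ x ∈ K, c • x ∈ K)
    (hf : ∀ c : ℝ, 0 < c → ∀ x ∈ K, f (c • x) = c * f x)
    (hg : ∀ c : ℝ, 0 < c → ∀ x ∈ K, g (c • x) = c * g x)
    (hf_pos : ∀ x ∈ K, x ≠ 0 → 0 < f x) (hg_pos : ∀ x ∈ K, x ≠ 0 → 0 < g x)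
    (hf_cont : Continuous f) (hg_cont : Continuous g) :
    {x | x ∈ K ∧ f x = 1} ≃ₜ {x | x ∈ K ∧ g x = 1} :=
  have g_pos (x : {x | x ∈ K ∧ f x = 1}) : 0 < g x :=
    hg_pos x x.2.1 (ne_zero_of_homogeneous_eq_one hf x.2.1 x.2.2)
  have f_pos (y : {x | x ∈ K ∧ g x = 1}) : 0 < f y :=
    hf_pos y y.2.1 (ne_zero_of_homogeneous_eq_one hg y.2.1 y.2.2)
  { toFun x := ⟨(g x)⁻¹ • (x : E), inv_smul_mem_levelSet hK hg x.2.1 (g_pos x)⟩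
    invFun y := ⟨(f y)⁻¹ • (y : E), inv_smul_mem_levelSet hK hf y.2.1 (f_pos y)⟩
    left_inv x := Subtype.ext <| inv_smul_inv_smul_of_eq_one hf x.2.1 x.2.2 (inv_pos.2 (g_pos x))
    right_inv y := Subtype.ext <| inv_smul_inv_smul_of_eq_one hg y.2.1 y.2.2 (inv_pos.2 (f_pos y))
    continuous_toFun := Continuous.subtype_mk (((hg_cont.comp continuous_subtype_val).inv₀
      fun x => (g_pos x).ne').smul continuous_subtype_val) _
    continuous_invFun := Continuous.subtype_mk (((hf_cont.comp continuous_subtype_val).inv₀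
      fun y => (f_pos y).ne').smul continuous_subtype_val) _ }

end RadialProjection

section NormalizedSegment

variable {V : Type*} [NormedAddCommGroup V] [InnerProductSpace ℝ V] {x e : V} {t : ℝ}

def normalizedSegment (x e : V) (t : ℝ) : V :=
  ‖(1 - t) • x + t • e‖⁻¹ • ((1 - t) • x + t • e)

lemma sq_add_sq_le_norm_segment_sq (hx : ‖x‖ = 1) (he : ‖e‖ = 1) (hxe : 0 ≤ ⟪x, e⟫)
    (ht₀ : 0 ≤ t) (ht₁ : t ≤ 1) : (1 - t) ^ 2 + t ^ 2 ≤ ‖(1 - t) • x + t • e‖ ^ 2 := by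
  rw [norm_add_sq_real, norm_smul, norm_smul, inner_smul_left, inner_smul_right, hx, he,
    Real.norm_of_nonneg (sub_nonneg.2 ht₁), Real.norm_of_nonneg ht₀]
  have : 0 ≤ t * (1 - t) * ⟪x, e⟫ := mul_nonneg (mul_nonneg ht₀ (sub_nonneg.2 ht₁)) hxe
  simp only [conj_trivial]
  nlinarith

lemma segment_ne_zero (hx : ‖x‖ = 1) (he : ‖e‖ = 1) (hxe : 0 ≤ ⟪x, e⟫) (ht₀ : 0 ≤ t)
    (ht₁ : t ≤ 1) : (1 - t) • x + t • e ≠ 0 := by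
  have h := sq_add_sq_le_norm_segment_sq hx he hxe ht₀ ht₁
  intro h0
  rw [h0, norm_zero] at h
  nlinarith

lemma one_sub_le_norm_segment (hx : ‖x‖ = 1) (he : ‖e‖ = 1) (hxe : 0 ≤ ⟪x, e⟫) (ht₀ : 0 ≤ t)
    (ht₁ : t ≤ 1) : 1 - t ≤ ‖(1 - t) • x + t • e‖ := by
  have h := sq_add_sq_le_norm_segment_sq hx he hxe ht₀ ht₁
  nlinarith [norm_nonneg ((1 - t) • x + t • e)]

lemma norm_normalizedSegment (h : (1 - t) • x + t • e ≠ 0) : ‖normalizedSegment x e t‖ = 1 := by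
  rw [normalizedSegment, norm_smul, norm_inv, norm_norm, inv_mul_cancel₀ (norm_ne_zero_iff.2 h)]

lemma normalizedSegment_zero (hx : ‖x‖ = 1) : normalizedSegment x e 0 = x := by
  simp [normalizedSegment, hx]

lemma normalizedSegment_one (he : ‖e‖ = 1) : normalizedSegment x e 1 = e := by
  simp [normalizedSegment, he]

lemma Continuous.normalizedSegment {X : Type*} [TopologicalSpace X] {x : X → V} {t : X → ℝ}
    (hx : Continuous x) (ht : Continuous t) (h : ∀ a, (1 - t a) • x a + t a • e ≠ 0) :
    Continuous fun a => _root_.normalizedSegment (x a) e (t a) := by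
  have hseg : Continuous fun a => (1 - t a) • x a + t a • e := by fun_prop
  exact (hseg.norm.inv₀ fun a => norm_ne_zero_iff.2 (h a)).smul hseg

end NormalizedSegment

section EuclideanCoordinates

variable {ι : Type*} [Fintype ι] {x e : EuclideanSpace ℝ ι} {t : ℝ}

lemma normalizedSegment_apply (i : ι) : normalizedSegment x e t i =
    ‖(1 - t) • x + t • e‖⁻¹ * ((1 - t) * x i + t * e i) := rfl

lemma abs_normalizedSegment_apply_le (hx : ‖x‖ = 1) (he : ‖e‖ = 1) (hxe : 0 ≤ ⟪x, e⟫)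
    (ht₀ : 0 ≤ t) (ht₁ : t ≤ 1) {i : ι} (hi : e i = 0) :
    |normalizedSegment x e t i| ≤ |x i| := by
  have hpos := norm_pos_iff.2 (segment_ne_zero hx he hxe ht₀ ht₁)
  have hle := one_sub_le_norm_segment hx he hxe ht₀ ht₁
  have hcoef : 0 ≤ ‖(1 - t) • x + t • e‖⁻¹ * (1 - t) :=
    mul_nonneg (inv_nonneg.2 hpos.le) (sub_nonneg.2 ht₁)
  rw [normalizedSegment_apply, hi, mul_zero, add_zero, ← mul_assoc, abs_mul, abs_of_nonneg hcoef]
  refine mul_le_of_le_one_left (abs_nonneg _) ?_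
  rwa [inv_mul_le_iff₀ hpos, mul_one]

lemma normalizedSegment_apply_nonneg (ht₀ : 0 ≤ t) (ht₁ : t ≤ 1) {i : ι} (hxi : 0 ≤ x i)
    (hei : 0 ≤ e i) : 0 ≤ normalizedSegment x e t i := by
  have : 0 ≤ 1 - t := sub_nonneg.2 ht₁
  rw [normalizedSegment_apply]
  positivity

lemma EuclideanSpace.norm_sq_fin_three (x : EuclideanSpace ℝ (Fin 3)) :
    ‖x‖ ^ 2 = x 0 ^ 2 + x 1 ^ 2 + x 2 ^ 2 := by
  simp [EuclideanSpace.real_norm_sq_eq, Fin.sum_univ_three]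

lemma EuclideanSpace.real_inner_single_one_right {ι : Type*} [Fintype ι] [DecidableEq ι]
    (x : EuclideanSpace ℝ ι) (i : ι) : ⟪x, single i 1⟫ = x i := by
  simp [EuclideanSpace.inner_single_right]

end EuclideanCoordinates

def ptolemyCone : Set (Fin 6 → ℝ) := {r | (∀ i, 0 ≤ r i) ∧ Pvec r = 0}

lemma smul_mem_ptolemyCone {c : ℝ} (hc : 0 ≤ c) {r : Fin 6 → ℝ} (hr : r ∈ ptolemyCone) :
    c • r ∈ ptolemyCone := by
  obtain ⟨hr, hP⟩ := hr
  refine ⟨fun i => mul_nonneg hc (hr i), ?_⟩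
  simp only [Pvec, Pi.smul_apply, smul_eq_mul] at hP ⊢
  linear_combination c ^ 2 * hP

def ptolemyCoords (r : Fin 6 → ℝ) : EuclideanSpace ℝ (Fin 3) × EuclideanSpace ℝ (Fin 3) :=
  (!₂[r 0 + r 5, r 1 - r 4, r 2 + r 3], !₂[r 0 - r 5, r 1 + r 4, r 2 - r 3])

def ptolemyHomeomorph : (Fin 6 → ℝ) ≃ₜ EuclideanSpace ℝ (Fin 3) × EuclideanSpace ℝ (Fin 3) where
  toFun := ptolemyCoords
  invFun p := ![(p.1 0 + p.2 0) / 2, (p.1 1 + p.2 1) / 2, (p.1 2 + p.2 2) / 2,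
    (p.1 2 - p.2 2) / 2, (p.2 1 - p.1 1) / 2, (p.1 0 - p.2 0) / 2]
  left_inv r := by ext i; fin_cases i <;> simp [ptolemyCoords]
  right_inv p := by ext i <;> fin_cases i <;> simp [ptolemyCoords] <;> ring
  continuous_toFun := by unfold ptolemyCoords; fun_prop
  continuous_invFun := by fun_prop

lemma ptolemyCoords_smul (c : ℝ) (r : Fin 6 → ℝ) :
    ptolemyCoords (c • r) = c • ptolemyCoords r := by
  ext i <;> fin_cases i <;> simp [ptolemyCoords] <;> ring

lemma norm_sq_fst_sub_norm_sq_snd_ptolemyCoords (r : Fin 6 → ℝ) :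
    ‖(ptolemyCoords r).1‖ ^ 2 - ‖(ptolemyCoords r).2‖ ^ 2 = 4 * Pvec r := by
  simp only [ptolemyCoords, EuclideanSpace.norm_sq_fin_three, Matrix.cons_val_zero,
    Matrix.cons_val_one, Matrix.cons_val, Pvec]
  ring

lemma norm_fst_ptolemyCoords_pos {r : Fin 6 → ℝ} (hr : r ∈ ptolemyCone) (hr0 : r ≠ 0) :
    0 < ‖(ptolemyCoords r).1‖ := by
  refine (norm_nonneg _).lt_of_ne fun hv => hr0 (ptolemyHomeomorph.injective ?_)
  have hw := norm_sq_fst_sub_norm_sq_snd_ptolemyCoords r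
  rw [← hv, hr.2] at hw
  have hw : ‖(ptolemyCoords r).2‖ = 0 := by nlinarith [norm_nonneg (ptolemyCoords r).2]
  have h0 : ptolemyCoords 0 = 0 := by simpa using ptolemyCoords_smul 0 0
  change ptolemyCoords r = ptolemyCoords 0
  rw [h0]
  exact Prod.ext (norm_eq_zero.1 hv.symm) (norm_eq_zero.1 hw)

lemma ptolemyCoords_mem_setE_iff (r : Fin 6 → ℝ) :
    ptolemyCoords r ∈ setE ↔ r ∈ ptolemyCone ∧ ‖(ptolemyCoords r).1‖ = 1 := by
  have hnorm := norm_sq_fst_sub_norm_sq_snd_ptolemyCoords r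
  have hb := norm_nonneg (ptolemyCoords r).2
  simp only [setE, ptolemyCone, Set.mem_ofPred_eq, ge_iff_le]
  generalize ‖(ptolemyCoords r).1‖ = a, ‖(ptolemyCoords r).2‖ = b at hnorm hb ⊢
  simp only [ptolemyCoords, PiLp.toLp_apply, Matrix.cons_val_zero, Matrix.cons_val_one,
    Matrix.cons_val, abs_sub_le_add_iff]
  constructor
  · rintro ⟨rfl, rfl, ⟨h0, h5⟩, ⟨h2, h3⟩, h14⟩
    have hP : Pvec r = 0 := by linarith
    have h1 : 0 ≤ r 1 ∧ 0 ≤ r 4 := by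
      -- `P = 0` makes `r 1 * r 4 = r 0 * r 5 + r 2 * r 3` nonnegative
      unfold Pvec at hP
      constructor <;> nlinarith [mul_nonneg h0 h5, mul_nonneg h2 h3]
    refine ⟨⟨fun i => ?_, hP⟩, rfl⟩
    fin_cases i <;> simp [h0, h1, h2, h3, h5]
  · rintro ⟨⟨hr, hP⟩, rfl⟩
    refine ⟨rfl, by nlinarith, ⟨hr 0, hr 5⟩, ⟨hr 2, hr 3⟩, add_nonneg (hr 1) (hr 4)⟩

lemma Ivec_smul (m1 m2 m3 m4 c : ℝ) (r : Fin 6 → ℝ) :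
    Ivec m1 m2 m3 m4 (c • r) = c ^ 2 * Ivec m1 m2 m3 m4 r := by
  simp only [Ivec, Pi.smul_apply, smul_eq_mul]; ring

lemma Ivec_pos {m1 m2 m3 m4 : ℝ} (hm1 : 0 < m1) (hm2 : 0 < m2) (hm3 : 0 < m3) (hm4 : 0 < m4)
    {r : Fin 6 → ℝ} (hr : r ≠ 0) : 0 < Ivec m1 m2 m3 m4 r := by
  refine mul_pos (by positivity) ?_
  contrapose! hr
  have hsq : ∀ i, r i ^ 2 ≤ 0 := by
    intro i
    fin_cases i <;> simp only [Fin.reduceFinMk, Fin.isValue] <;>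
      nlinarith [mul_pos hm1 hm2, mul_pos hm1 hm3, mul_pos hm1 hm4, mul_pos hm2 hm3,
        mul_pos hm2 hm4, mul_pos hm3 hm4, sq_nonneg (r 0), sq_nonneg (r 1), sq_nonneg (r 2),
        sq_nonneg (r 3), sq_nonneg (r 4), sq_nonneg (r 5)]
  funext i
  exact pow_eq_zero_iff two_ne_zero |>.1 ((hsq i).antisymm (sq_nonneg _))

lemma setMplus_eq (m1 m2 m3 m4 : ℝ) :
    setMplus m1 m2 m3 m4 = {r | r ∈ ptolemyCone ∧ √(Ivec m1 m2 m3 m4 r) = 1} := by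
  ext r
  simp only [setMplus, ptolemyCone, Set.mem_ofPred_eq, Real.sqrt_eq_one]
  tauto

def setMplusHomeomorphSetE {m1 m2 m3 m4 : ℝ} (hm1 : 0 < m1) (hm2 : 0 < m2) (hm3 : 0 < m3)
    (hm4 : 0 < m4) : setMplus m1 m2 m3 m4 ≃ₜ setE :=
  (Homeomorph.setCongr (setMplus_eq m1 m2 m3 m4)).trans <|
    (radialHomeomorph (fun c hc r hr => smul_mem_ptolemyCone hc.le hr)
      (fun c hc r _ => by rw [Ivec_smul, Real.sqrt_mul (by positivity), Real.sqrt_sq hc.le])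
      (fun c hc r _ => by
        rw [ptolemyCoords_smul, Prod.smul_fst, norm_smul, Real.norm_of_nonneg hc.le])
      (fun r _ hr => Real.sqrt_pos.2 (Ivec_pos hm1 hm2 hm3 hm4 hr))
      (fun r hr hr0 => norm_fst_ptolemyCoords_pos hr hr0)
      (by unfold Ivec; fun_prop) (by fun_prop)).trans <|
    ptolemyHomeomorph.subtype fun r => (ptolemyCoords_mem_setE_iff r).symm

section Contractible

lemma setE.inner_snd_nonneg {p : EuclideanSpace ℝ (Fin 3) × EuclideanSpace ℝ (Fin 3)}
    (hp : p ∈ setE) : 0 ≤ ⟪p.2, single 1 1⟫ := by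
  rw [real_inner_single_one_right]; exact hp.2.2.2.2

lemma setE.inner_fst_nonneg {p : EuclideanSpace ℝ (Fin 3) × EuclideanSpace ℝ (Fin 3)}
    (hp : p ∈ setE) : 0 ≤ ⟪p.1, single 0 1⟫ := by
  rw [real_inner_single_one_right]; exact (abs_nonneg _).trans hp.2.2.1

lemma normalizedSegment_snd_mem_setE {p : EuclideanSpace ℝ (Fin 3) × EuclideanSpace ℝ (Fin 3)}
    (hp : p ∈ setE) {t : ℝ} (ht₀ : 0 ≤ t) (ht₁ : t ≤ 1) :
    (p.1, normalizedSegment p.2 (single 1 1) t) ∈ setE := by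
  have hwe := setE.inner_snd_nonneg hp
  obtain ⟨hv, hw, h0, h2, h1⟩ := hp
  have he : ‖(single 1 1 : EuclideanSpace ℝ (Fin 3))‖ = 1 := by simp
  refine ⟨hv, norm_normalizedSegment (segment_ne_zero hw he hwe ht₀ ht₁),
    ?_, ?_, normalizedSegment_apply_nonneg ht₀ ht₁ h1 (by simp)⟩
  · exact (abs_normalizedSegment_apply_le hw he hwe ht₀ ht₁ (by simp)).trans h0
  · exact (abs_normalizedSegment_apply_le hw he hwe ht₀ ht₁ (by simp)).trans h2

lemma normalizedSegment_fst_mem_setE {p : EuclideanSpace ℝ (Fin 3) × EuclideanSpace ℝ (Fin 3)}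
    (hp : p ∈ setE) {t : ℝ} (ht₀ : 0 ≤ t) (ht₁ : t ≤ 1) :
    (normalizedSegment p.1 (single 0 1) t, single 1 1) ∈ setE := by
  have hve := setE.inner_fst_nonneg hp
  obtain ⟨hv, -, h0, h2, -⟩ := hp
  have he : ‖(single 0 1 : EuclideanSpace ℝ (Fin 3))‖ = 1 := by simp
  have h0 : 0 ≤ p.1 0 := (abs_nonneg _).trans h0
  refine ⟨norm_normalizedSegment (segment_ne_zero hv he hve ht₀ ht₁), by simp,
    ?_, ?_, by simp⟩
  · simpa using normalizedSegment_apply_nonneg ht₀ ht₁ h0 (by simp)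
  · simpa using normalizedSegment_apply_nonneg ht₀ ht₁ ((abs_nonneg _).trans h2) (by simp)

def setE.collapseSnd : C(setE, setE) where
  toFun p := ⟨(p.1.1, single 1 1), by
    simpa [normalizedSegment_one] using normalizedSegment_snd_mem_setE p.2 zero_le_one le_rfl⟩

def setE.base : setE :=
  ⟨(single 0 1, single 1 1), by simp [setE]⟩

def setE.homotopyCollapseSnd : (ContinuousMap.id setE).Homotopy setE.collapseSnd where
  toFun q := ⟨(q.2.1.1, normalizedSegment q.2.1.2 (single 1 1) q.1),
    normalizedSegment_snd_mem_setE q.2.2 q.1.2.1 q.1.2.2⟩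
  continuous_toFun := by
    refine Continuous.subtype_mk (Continuous.prodMk (by fun_prop)
      (Continuous.normalizedSegment (by fun_prop) (by fun_prop) fun q => ?_)) _
    exact segment_ne_zero q.2.2.2.1 (by simp) (setE.inner_snd_nonneg q.2.2) q.1.2.1 q.1.2.2
  map_zero_left p := Subtype.ext <| Prod.ext rfl <| normalizedSegment_zero p.2.2.1
  map_one_left p := Subtype.ext <| Prod.ext rfl <| normalizedSegment_one (by simp)

def setE.homotopyCollapseFst : setE.collapseSnd.Homotopy (ContinuousMap.const setE setE.base) where
  toFun q := ⟨(normalizedSegment q.2.1.1 (single 0 1) q.1, single 1 1),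
    normalizedSegment_fst_mem_setE q.2.2 q.1.2.1 q.1.2.2⟩
  continuous_toFun := by
    refine Continuous.subtype_mk (Continuous.prodMk
      (Continuous.normalizedSegment (by fun_prop) (by fun_prop) fun q => ?_) continuous_const) _
    exact segment_ne_zero q.2.2.1 (by simp) (setE.inner_fst_nonneg q.2.2) q.1.2.1 q.1.2.2
  map_zero_left p := Subtype.ext <| Prod.ext (normalizedSegment_zero p.2.1) rfl
  map_one_left p := Subtype.ext <| Prod.ext (normalizedSegment_one (by simp)) rfl

instance setE.contractibleSpace : ContractibleSpace setE :=
  (contractible_iff_id_nullhomotopic setE).2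
    ⟨setE.base, ⟨setE.homotopyCollapseSnd.trans setE.homotopyCollapseFst⟩⟩

end Contractible

end

/-- `E` is contractible, and for positive masses `𝓜⁺` is homeomorphic to `E`. -/
theorem setE_contractible_and_setMplus_homeomorph_setE
    (m1 m2 m3 m4 : ℝ)
    (hm1 : 0 < m1) (hm2 : 0 < m2) (hm3 : 0 < m3) (hm4 : 0 < m4) :
    ContractibleSpace ↥setE ∧
      Nonempty (↥(setMplus m1 m2 m3 m4) ≃ₜ ↥setE) :=
  ⟨setE.contractibleSpace, ⟨setMplusHomeomorphSetE hm1 hm2 hm3 hm4⟩⟩
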